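/- arXiv:1908.03834 — 4 statements merged into one kernel-verified Lean document; each statement's English description precedes it below -/
import Mathlib

section
/- The quantity ((1/2^k) Σ_{i=0}^{k} (2^i/(i+1)!) C(k,i)) tends to 0 as k → ∞. -/
/-!
The weights `2^i/(i+1)!` decay faster than any geometric sequence; bounding them by
`e^4 (1/2)^i` and summing with the binomial theorem gives at most `e^4 (3/2)^k`, so the
quantity is squeezed between `0` and `e^4 (3/4)^k`.
-/

open Finset Filter

lemma pow_div_factorial_le_exp_mul_div_pow {x y : ℝ} (hx : 0 ≤ x) (hy : 0 < y) (n : ℕ) :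
    x ^ n / n.factorial ≤ Real.exp (x * y) / y ^ n := by
  rw [le_div_iff₀ (by positivity), div_mul_eq_mul_div, ← mul_pow]
  exact Real.pow_div_factorial_le_exp _ (by positivity) n

lemma two_pow_div_factorial_succ_le (i : ℕ) :
    (2 : ℝ) ^ i / (i + 1).factorial ≤ Real.exp 4 * (1 / 2) ^ i :=
  calc (2 : ℝ) ^ i / (i + 1).factorial
      ≤ 2 ^ i / i.factorial := by
        gcongr
        exact i.le_succ
    _ ≤ Real.exp (2 * 2) / 2 ^ i := pow_div_factorial_le_exp_mul_div_pow (by norm_num) two_pos i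
    _ = Real.exp 4 * (1 / 2) ^ i := by rw [one_div_pow, mul_one_div]; norm_num

lemma sum_mul_choose_le_of_le_geometric {a : ℕ → ℝ} {c r : ℝ} (h : ∀ i, a i ≤ c * r ^ i)
    (k : ℕ) : ∑ i ∈ range (k + 1), a i * k.choose i ≤ c * (r + 1) ^ k :=
  calc ∑ i ∈ range (k + 1), a i * k.choose i
      ≤ ∑ i ∈ range (k + 1), c * r ^ i * k.choose i := by
        gcongr with i
        exact h i
    _ = c * (r + 1) ^ k := by simp only [add_pow, one_pow, mul_one, mul_sum, mul_assoc]

/-- The quantity `(1/2^k) Σ_{i=0}^{k} (2^i/(i+1)!) C(k,i)` tends to 0 as k → ∞. -/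
theorem ratio_sum_tendsto_zero :
    Tendsto
      (fun k : ℕ =>
        (1 / 2 ^ k : ℝ) *
          ∑ i ∈ Finset.range (k + 1),
            (2 ^ i / (Nat.factorial (i + 1) : ℝ)) * (Nat.choose k i))
      atTop (nhds 0) := by
  have hgeom : Tendsto (fun k : ℕ => Real.exp 4 * (3 / 4 : ℝ) ^ k) atTop (nhds 0) := by
    simpa using (tendsto_pow_atTop_nhds_zero_of_lt_one (by norm_num) (by norm_num)).const_mul
      (Real.exp 4)
  refine tendsto_of_tendsto_of_tendsto_of_le_of_le tendsto_const_nhds hgeom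
    (fun k => by positivity) (fun k => ?_)
  calc (1 / 2 ^ k : ℝ) * ∑ i ∈ range (k + 1), 2 ^ i / ((i + 1).factorial : ℝ) * k.choose i
      ≤ (1 / 2 ^ k) * (Real.exp 4 * (1 / 2 + 1) ^ k) := by
        gcongr
        exact sum_mul_choose_le_of_le_geometric two_pow_div_factorial_succ_le k
    _ = Real.exp 4 * (3 / 4) ^ k := by
        rw [one_div_mul_eq_div, mul_div_assoc, ← div_pow]
        norm_num
end

section
/- For all integers k ≥ 1, (2k-1)!! + (1/(k+1))·C(2k,k) + 2k·Σ_{j=1}^{k-1} (2k-2j-1)!!·(1/(j+1))·C(2j,j) ≥ (2^k/(k+1))·C(2k,k). -/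
/-!
Since `(2k)! = 2^k k! (2k-1)!!`, we have `2^k C(2k,k) k! = 4^k (2k-1)!!`, and `4^k ≤ (k+1)!` once
`k ≥ 6`; so for `k ≥ 6` the term `(2k-1)!!` alone dominates `2^k C(2k,k)/(k+1)`, all other terms
being nonnegative. The cases `k ≤ 5` are checked numerically.
-/

namespace Nat

theorem factorial_two_mul_eq (k : ℕ) : (2 * k)! = 2 ^ k * k ! * (2 * k - 1)‼ := by
  cases k with
  | zero => rfl
  | succ k =>
    rw [show 2 * (k + 1) - 1 = 2 * k + 1 by omega, show 2 * (k + 1) = 2 * k + 1 + 1 by omega,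
      factorial_eq_mul_doubleFactorial, show 2 * k + 1 + 1 = 2 * (k + 1) by omega,
      doubleFactorial_two_mul]

theorem choose_two_mul_mul_factorial (k : ℕ) :
    (2 * k).choose k * k ! = 2 ^ k * (2 * k - 1)‼ := by
  have hchoose : (2 * k).choose k * k ! * k ! = (2 * k)! := by
    simpa [show 2 * k - k = k by omega] using
      choose_mul_factorial_mul_factorial (show k ≤ 2 * k by omega)
  apply Nat.eq_of_mul_eq_mul_right (factorial_pos k)
  rw [hchoose, factorial_two_mul_eq]
  ring

theorem four_pow_le_factorial_succ {k : ℕ} (hk : 6 ≤ k) : 4 ^ k ≤ (k + 1)! := by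
  induction k, hk using Nat.le_induction with
  | base => decide
  | succ n _ ih =>
    calc 4 ^ (n + 1) = 4 * 4 ^ n := by ring
      _ ≤ (n + 2) * (n + 1)! := Nat.mul_le_mul (by omega) ih

theorem two_pow_mul_choose_two_mul_le {k : ℕ} (hk : 6 ≤ k) :
    2 ^ k * (2 * k).choose k ≤ (k + 1) * (2 * k - 1)‼ := by
  apply Nat.le_of_mul_le_mul_right _ (factorial_pos k)
  calc 2 ^ k * (2 * k).choose k * k ! = 4 ^ k * (2 * k - 1)‼ := by
        rw [mul_assoc, choose_two_mul_mul_factorial, ← mul_assoc, ← mul_pow]; norm_num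
    _ ≤ (k + 1)! * (2 * k - 1)‼ := Nat.mul_le_mul_right _ (four_pow_le_factorial_succ hk)
    _ = (k + 1) * (2 * k - 1)‼ * k ! := by rw [factorial_succ]; ring

end Nat

theorem lower_bound_even_moments_general (k : ℕ) :
    (Nat.doubleFactorial (2 * k - 1) : ℝ)
        + (1 / ((k : ℝ) + 1)) * (Nat.choose (2 * k) k)
        + 2 * k *
            ∑ j ∈ Finset.Icc 1 (k - 1),
              (Nat.doubleFactorial (2 * k - 2 * j - 1) : ℝ) * (1 / ((j : ℝ) + 1))
                * (Nat.choose (2 * j) j)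
      ≥ (2 ^ k / ((k : ℝ) + 1)) * (Nat.choose (2 * k) k) := by
  rcases Nat.lt_or_ge k 6 with hsmall | hlarge
  · interval_cases k <;> norm_num [Finset.sum_Icc_succ_top, Nat.doubleFactorial, Nat.choose]
  · have hmain : (2 ^ k / ((k : ℝ) + 1)) * (Nat.choose (2 * k) k)
        ≤ (Nat.doubleFactorial (2 * k - 1) : ℝ) := by
      rw [div_mul_eq_mul_div, div_le_iff₀ (by positivity), mul_comm _ ((k : ℝ) + 1)]
      exact_mod_cast Nat.two_pow_mul_choose_two_mul_le hlarge
    have hrest : (0 : ℝ) ≤ (1 / ((k : ℝ) + 1)) * (Nat.choose (2 * k) k)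
        + 2 * k * ∑ j ∈ Finset.Icc 1 (k - 1),
            (Nat.doubleFactorial (2 * k - 2 * j - 1) : ℝ) * (1 / ((j : ℝ) + 1))
              * (Nat.choose (2 * j) j) := by
      positivity
    linarith

/-- For all integers k ≥ 1,
`(2k-1)!! + (1/(k+1))·C(2k,k) + 2k·Σ_{j=1}^{k-1} (2k-2j-1)!!·(1/(j+1))·C(2j,j)
  ≥ (2^k/(k+1))·C(2k,k)`. -/
theorem lower_bound_even_moments (k : ℕ) (hk : 1 ≤ k) :
    (Nat.doubleFactorial (2 * k - 1) : ℝ)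
        + (1 / ((k : ℝ) + 1)) * (Nat.choose (2 * k) k)
        + 2 * k *
            ∑ j ∈ Finset.Icc 1 (k - 1),
              (Nat.doubleFactorial (2 * k - 2 * j - 1) : ℝ) * (1 / ((j : ℝ) + 1))
                * (Nat.choose (2 * j) j)
      ≥ (2 ^ k / ((k : ℝ) + 1)) * (Nat.choose (2 * k) k) :=
  lower_bound_even_moments_general k
end

section
/- Let X_1, …, X_k be N×N complex matrices and p_1, …, p_k positive reals with Σ_{i=1}^k 1/p_i = 1. Then |Tr(X_1 X_2 ⋯ X_k)| ≤ Π_{i=1}^k ‖X_i‖_{p_i}, where ‖X‖_p = (Σ_{i=1}^N σ_i(X)^p)^{1/p} is the p-Schatten norm. -/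
open scoped BigOperators ComplexOrder

/-- The i-th singular value of a square complex matrix X: the square root of
the i-th eigenvalue of the positive semidefinite matrix Xᴴ X. -/
noncomputable def singularValues {N : ℕ} (X : Matrix (Fin N) (Fin N) ℂ) :
    Fin N → ℝ :=
  fun i => Real.sqrt ((Matrix.posSemidef_conjTranspose_mul_self X).1.eigenvalues i)

/-- The p-Schatten norm `‖X‖_p = (Σ_i σ_i(X)^p)^{1/p}`. -/
noncomputable def schattenNorm {N : ℕ} (p : ℝ) (X : Matrix (Fin N) (Fin N) ℂ) : ℝ :=
  (∑ i, singularValues X i ^ p) ^ (1 / p)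

/-!
Write `X_j = ‖X_j‖_{p_j} • C_j D_j ^ (1 / p_j) V_j` with `C_j`, `V_j` contractions and `D_j` the
diagonal matrix of the weights `σ_i(X_j) ^ p_j / ‖X_j‖_{p_j} ^ p_j`, which sum to one. It then
suffices that `|Tr (A ∏_j C_j D_j ^ t_j B_j)| ≤ 1` for contractions `A, C_j, B_j`, nonnegative
diagonal `D_j` of trace at most one and `t_j > 0` with `∑ t_j = 1`. This goes by induction on the
number of factors, applying the three lines theorem to
`z ↦ Tr (A C₀ D₀ ^ z B₀ ∏_{j > 0} C_j D_j ^ ((1 - z) s_j) B_j)` with `s_j = t_j / (1 - t₀)`: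
on `Re z = 0` the imaginary powers are contractions that can be absorbed into `A` and the `B_j`,
leaving an instance with one factor less, and on `Re z = 1` the trace is `Tr (D₀ M)` for a
contraction `M`, hence at most `Tr D₀ ≤ 1`.
-/

open Matrix
open scoped Matrix.Norms.L2Operator

theorem Differentiable.list_prod_ofFn {𝕜 E 𝔸 : Type*} [NontriviallyNormedField 𝕜]
    [NormedAddCommGroup E] [NormedSpace 𝕜 E] [NormedRing 𝔸] [NormedAlgebra 𝕜 𝔸] {k : ℕ}
    {F : Fin k → E → 𝔸} (hF : ∀ j, Differentiable 𝕜 (F j)) :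
    Differentiable 𝕜 fun x => (List.ofFn fun j => F j x).prod := by
  induction k with
  | zero => simp
  | succ k ih =>
    simp only [List.ofFn_succ, List.prod_cons]
    exact (hF 0).mul (ih fun j => hF j.succ)

theorem Differentiable.matrix_trace {n : Type*} [Fintype n] [DecidableEq n]
    {f : ℂ → Matrix n n ℂ} (hf : Differentiable ℂ f) : Differentiable ℂ fun z => trace (f z) := by
  have htrace : Differentiable ℂ (trace : Matrix n n ℂ → ℂ) :=
    (LinearMap.toContinuousLinearMap (traceLinearMap n ℂ ℂ)).differentiable
  exact htrace.comp hf

lemma Complex.HadamardThreeLines.norm_le_one_of_mem_verticalClosedStrip {E : Type*}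
    [NormedAddCommGroup E] [NormedSpace ℂ E] {f : ℂ → E} (hf : Differentiable ℂ f)
    (hB : BddAbove ((norm ∘ f) '' verticalClosedStrip 0 1))
    (h₀ : ∀ z : ℂ, z.re = 0 → ‖f z‖ ≤ 1) (h₁ : ∀ z : ℂ, z.re = 1 → ‖f z‖ ≤ 1) {z : ℂ}
    (hz : z ∈ verticalClosedStrip 0 1) : ‖f z‖ ≤ 1 := by
  simpa using norm_le_interp_of_mem_verticalClosedStrip₀₁' f hz hf.diffContOnCl hB h₀ h₁

lemma norm_mul_le_one_of_le_one {R : Type*} [NonUnitalSeminormedRing R] {a b : R}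
    (ha : ‖a‖ ≤ 1) (hb : ‖b‖ ≤ 1) : ‖a * b‖ ≤ 1 :=
  (norm_mul_le a b).trans (mul_le_one₀ ha (norm_nonneg b) hb)

lemma List.prod_ofFn_smul {R A : Type*} [CommMonoid R] [Monoid A] [MulAction R A]
    [IsScalarTower R A A] [SMulCommClass R A A] {k : ℕ} (c : Fin k → R) (M : Fin k → A) :
    (List.ofFn fun j => c j • M j).prod = (∏ j, c j) • (List.ofFn M).prod := by
  induction k with
  | zero => simp
  | succ k ih =>
    rw [List.ofFn_succ, List.prod_cons, ih, List.ofFn_succ, List.prod_cons, Fin.prod_univ_succ,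
      smul_mul_smul_comm]

namespace Matrix

variable {n : Type*} [DecidableEq n]

/-- `diagonal d ^ w`, with `0 ^ w = 0` for every `w` (`Complex.cpow` has `0 ^ 0 = 1`), which makes
`w ↦ diagonalCpow d w` multiplicative. -/
noncomputable def diagonalCpow (d : n → ℝ) (w : ℂ) : Matrix n n ℂ :=
  diagonal fun i => if d i = 0 then 0 else (d i : ℂ) ^ w

lemma diagonalCpow_one (d : n → ℝ) : diagonalCpow d 1 = diagonal fun i => (d i : ℂ) := by
  simp only [diagonalCpow, Complex.cpow_one]
  congr 1; funext i
  split_ifs with h <;> simp [h]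

lemma diagonalCpow_ofReal {d : n → ℝ} (hd : 0 ≤ d) {t : ℝ} (ht : t ≠ 0) :
    diagonalCpow d t = diagonal fun i => ((d i ^ t : ℝ) : ℂ) := by
  simp only [diagonalCpow]
  congr 1; funext i
  split_ifs with h
  · simp [h, Real.zero_rpow ht]
  · exact (Complex.ofReal_cpow (hd i) t).symm

variable [Fintype n]

lemma diagonalCpow_add (d : n → ℝ) (a b : ℂ) :
    diagonalCpow d (a + b) = diagonalCpow d a * diagonalCpow d b := by
  simp only [diagonalCpow, diagonal_mul_diagonal]
  congr 1; funext i
  split_ifs with h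
  · simp
  · exact Complex.cpow_add _ _ (by exact_mod_cast h)

lemma norm_diagonalCpow_le_one {d : n → ℝ} (hd0 : 0 ≤ d) (hd1 : d ≤ 1) {w : ℂ}
    (hw : 0 ≤ w.re) : ‖diagonalCpow d w‖ ≤ 1 := by
  rw [diagonalCpow, l2_opNorm_diagonal, pi_norm_le_iff_of_nonneg zero_le_one]
  intro i
  split_ifs with h
  · simp
  · rw [Complex.norm_cpow_eq_rpow_re_of_pos ((hd0 i).lt_of_ne' h)]
    exact Real.rpow_le_one (hd0 i) (hd1 i) hw

lemma differentiable_diagonalCpow (d : n → ℝ) : Differentiable ℂ (diagonalCpow d) := by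
  have hdiag : Differentiable ℂ fun v : n → ℂ => (diagonal v : Matrix n n ℂ) :=
    (LinearMap.toContinuousLinearMap (diagonalLinearMap n ℂ ℂ)).differentiable
  refine hdiag.comp (differentiable_pi.2 fun i => ?_)
  split_ifs with h
  · exact differentiable_const _
  · exact differentiable_id.const_cpow (Or.inl (by exact_mod_cast h))

lemma diagonal_ofReal_eq_smul_diagonalCpow {σ : n → ℝ} (hσ : 0 ≤ σ) {p : ℝ} (hp : 0 < p) :
    diagonal (fun i => (σ i : ℂ)) = (((∑ i, σ i ^ p) ^ (1 / p) : ℝ) : ℂ) •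
      diagonalCpow (fun i => σ i ^ p / ∑ j, σ j ^ p) (1 / p : ℝ) := by
  have hσp : ∀ i, 0 ≤ σ i ^ p := fun i => Real.rpow_nonneg (hσ i) p
  set S := ∑ j, σ j ^ p
  have hS0 : 0 ≤ S := Finset.sum_nonneg fun j _ => hσp j
  have hS : ∀ i, S * (σ i ^ p / S) = σ i ^ p := by
    intro i
    rcases eq_or_ne S 0 with h | h
    · rw [h, zero_mul, eq_comm]
      exact le_antisymm (h ▸ Finset.single_le_sum (fun j _ => hσp j) (Finset.mem_univ i)) (hσp i)
    · exact mul_div_cancel₀ _ h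
  rw [diagonalCpow_ofReal (fun i => div_nonneg (hσp i) hS0) (one_div_pos.2 hp).ne',
    ← diagonal_smul]
  congr 1; funext i
  rw [Pi.smul_apply, smul_eq_mul, ← Complex.ofReal_mul,
    ← Real.mul_rpow hS0 (div_nonneg (hσp i) hS0), hS, ← Real.rpow_mul (hσ i),
    mul_one_div_cancel hp.ne', Real.rpow_one]

lemma norm_one_le : ‖(1 : Matrix n n ℂ)‖ ≤ 1 := by
  rw [cstar_norm_def, map_one]
  exact ContinuousLinearMap.norm_id_le

lemma norm_list_prod_le_one {l : List (Matrix n n ℂ)} (h : ∀ A ∈ l, ‖A‖ ≤ 1) :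
    ‖l.prod‖ ≤ 1 := by
  induction l with
  | nil => exact norm_one_le
  | cons A l ih =>
    rw [List.prod_cons]
    exact norm_mul_le_one_of_le_one (h A (by simp)) (ih fun B hB => h B (by simp [hB]))

lemma norm_apply_le_l2_opNorm (A : Matrix n n ℂ) (i j : n) : ‖A i j‖ ≤ ‖A‖ := by
  set T := toEuclideanCLM (n := n) (𝕜 := ℂ) A
  have hA : A i j = (T (EuclideanSpace.single j 1)).ofLp i := by simp [T]
  calc ‖A i j‖ ≤ ‖T (EuclideanSpace.single j 1)‖ := hA ▸ PiLp.norm_apply_le _ i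
    _ ≤ ‖A‖ * ‖EuclideanSpace.single j (1 : ℂ)‖ := T.le_opNorm _
    _ = ‖A‖ := by simp

lemma norm_trace_diagonal_mul_le {d : n → ℝ} (hd : 0 ≤ d) (A : Matrix n n ℂ) :
    ‖trace (diagonal (fun i => (d i : ℂ)) * A)‖ ≤ (∑ i, d i) * ‖A‖ := by
  rw [trace, Finset.sum_mul]
  refine (norm_sum_le _ _).trans (Finset.sum_le_sum fun i _ => ?_)
  rw [diag_apply, diagonal_mul, norm_mul, Complex.norm_of_nonneg (hd i)]
  exact mul_le_mul_of_nonneg_left (norm_apply_le_l2_opNorm A i i) (hd i)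

lemma norm_trace_le (A : Matrix n n ℂ) : ‖trace A‖ ≤ Fintype.card n * ‖A‖ := by
  simpa using norm_trace_diagonal_mul_le (d := 1) zero_le_one A

lemma norm_trace_mul_diagonal_mul_le {M K : Matrix n n ℂ} (hM : ‖M‖ ≤ 1) (hK : ‖K‖ ≤ 1)
    {d : n → ℝ} (hd : 0 ≤ d) :
    ‖trace (M * diagonal (fun i => (d i : ℂ)) * K)‖ ≤ ∑ i, d i := by
  rw [mul_assoc, trace_mul_comm, mul_assoc]
  exact (norm_trace_diagonal_mul_le hd _).trans
    (mul_le_of_le_one_right (Finset.sum_nonneg fun i _ => hd i) (norm_mul_le_one_of_le_one hK hM))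

lemma conjTranspose_mul_diagonal_mul_self {Y : Matrix n n ℂ} {e : n → ℂ}
    (hY : Yᴴ * Y = diagonal e) (v : n → ℂ) :
    (Y * diagonal v)ᴴ * (Y * diagonal v) = diagonal fun i => star (v i) * e i * v i := by
  rw [conjTranspose_mul, diagonal_conjTranspose, mul_assoc, ← mul_assoc Yᴴ, hY,
    diagonal_mul_diagonal, diagonal_mul_diagonal]
  simp only [Pi.star_apply, mul_assoc]

/-- Polar decomposition for a matrix with orthogonal columns: the contraction is `Y D⁺`, where
`D⁺` is the pseudo-inverse of `D = diagonal σ` (`(0 : ℂ)⁻¹ = 0` supplies it). -/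
lemma exists_contraction_mul_diagonal_eq {Y : Matrix n n ℂ} {σ : n → ℝ}
    (hY : Yᴴ * Y = diagonal fun i => (σ i : ℂ) ^ 2) :
    ∃ C : Matrix n n ℂ, ‖C‖ ≤ 1 ∧ Y = C * diagonal fun i => (σ i : ℂ) := by
  have hgram := conjTranspose_mul_diagonal_mul_self hY
  set C := Y * diagonal fun i => (σ i : ℂ)⁻¹
  refine ⟨C, ?_, ?_⟩
  · have hCC : ‖Cᴴ * C‖ ≤ 1 := by
      rw [hgram, l2_opNorm_diagonal, pi_norm_le_iff_of_nonneg zero_le_one]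
      intro i
      rcases eq_or_ne (σ i) 0 with h | h
      · simp [h]
      · have h' : (σ i : ℂ) ≠ 0 := by exact_mod_cast h
        simp [Complex.conj_ofReal, field]
    rw [l2_opNorm_conjTranspose_mul_self] at hCC
    nlinarith [norm_nonneg C]
  · have hker : Y * diagonal (fun i => 1 - (σ i : ℂ)⁻¹ * σ i) = 0 := by
      rw [← conjTranspose_mul_self_eq_zero, hgram, ← diagonal_zero]
      congr 1; funext i
      rcases eq_or_ne (σ i) 0 with h | h
      · simp [h]
      · simp [inv_mul_cancel₀ (show (σ i : ℂ) ≠ 0 by exact_mod_cast h)]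
    rw [← diagonal_sub, diagonal_one, mul_sub, mul_one, sub_eq_zero] at hker
    rw [mul_assoc, diagonal_mul_diagonal, ← hker]

variable {k : ℕ}

noncomputable def diagonalCpowProd (C B : Fin k → Matrix n n ℂ) (d : Fin k → n → ℝ)
    (w : Fin k → ℂ) : Matrix n n ℂ :=
  (List.ofFn fun j => C j * diagonalCpow (d j) (w j) * B j).prod

lemma diagonalCpowProd_succ (C B : Fin (k + 1) → Matrix n n ℂ) (d : Fin (k + 1) → n → ℝ)
    (w : Fin (k + 1) → ℂ) :
    diagonalCpowProd C B d w = C 0 * diagonalCpow (d 0) (w 0) * B 0 *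
      diagonalCpowProd (Fin.tail C) (Fin.tail B) (Fin.tail d) (Fin.tail w) := by
  rw [diagonalCpowProd, List.ofFn_succ, List.prod_cons]
  rfl

lemma diagonalCpowProd_add (C B : Fin k → Matrix n n ℂ) (d : Fin k → n → ℝ) (v w : Fin k → ℂ) :
    diagonalCpowProd C B d (v + w) =
      diagonalCpowProd C (fun j => diagonalCpow (d j) (v j) * B j) d w := by
  simp only [diagonalCpowProd, Pi.add_apply, diagonalCpow_add, add_comm (v _), mul_assoc]

lemma norm_diagonalCpowProd_le_one {C B : Fin k → Matrix n n ℂ} (hC : ∀ j, ‖C j‖ ≤ 1)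
    (hB : ∀ j, ‖B j‖ ≤ 1) {d : Fin k → n → ℝ} (hd0 : ∀ j, 0 ≤ d j) (hd1 : ∀ j, d j ≤ 1)
    {w : Fin k → ℂ} (hw : ∀ j, 0 ≤ (w j).re) : ‖diagonalCpowProd C B d w‖ ≤ 1 := by
  refine norm_list_prod_le_one fun A hA => ?_
  obtain ⟨j, rfl⟩ := List.mem_ofFn.1 hA
  exact norm_mul_le_one_of_le_one (norm_mul_le_one_of_le_one (hC j)
    (norm_diagonalCpow_le_one (hd0 j) (hd1 j) (hw j))) (hB j)

lemma norm_trace_mul_diagonalCpowProd_le_card {A : Matrix n n ℂ} (hA : ‖A‖ ≤ 1)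
    {C B : Fin k → Matrix n n ℂ} (hC : ∀ j, ‖C j‖ ≤ 1) (hB : ∀ j, ‖B j‖ ≤ 1)
    {d : Fin k → n → ℝ} (hd0 : ∀ j, 0 ≤ d j) (hd1 : ∀ j, d j ≤ 1)
    {w : Fin k → ℂ} (hw : ∀ j, 0 ≤ (w j).re) :
    ‖trace (A * diagonalCpowProd C B d w)‖ ≤ Fintype.card n :=
  (norm_trace_le _).trans (mul_le_of_le_one_right (Nat.cast_nonneg _)
    (norm_mul_le_one_of_le_one hA (norm_diagonalCpowProd_le_one hC hB hd0 hd1 hw)))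

lemma differentiable_diagonalCpowProd (C B : Fin k → Matrix n n ℂ) (d : Fin k → n → ℝ)
    {w : Fin k → ℂ → ℂ} (hw : ∀ j, Differentiable ℂ (w j)) :
    Differentiable ℂ fun z => diagonalCpowProd C B d fun j => w j z :=
  Differentiable.list_prod_ofFn fun j =>
    ((differentiable_const _).mul ((differentiable_diagonalCpow (d j)).comp (hw j))).mul
      (differentiable_const _)

lemma norm_trace_mul_diagonalCpowProd_le_of_re_eq_one {A : Matrix n n ℂ} (hA : ‖A‖ ≤ 1)
    {C B : Fin (k + 1) → Matrix n n ℂ} (hC : ∀ j, ‖C j‖ ≤ 1) (hB : ∀ j, ‖B j‖ ≤ 1)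
    {d : Fin (k + 1) → n → ℝ} (hd0 : ∀ j, 0 ≤ d j) (hd1 : ∀ j, d j ≤ 1)
    {w : Fin (k + 1) → ℂ} (hw₀ : (w 0).re = 1) (hw : ∀ j : Fin k, 0 ≤ (w j.succ).re) :
    ‖trace (A * diagonalCpowProd C B d w)‖ ≤ ∑ i, d 0 i := by
  have hsplit : diagonalCpow (d 0) (w 0) =
      diagonalCpow (d 0) (w 0 - 1) * diagonal fun i => (d 0 i : ℂ) := by
    rw [← diagonalCpow_one, ← diagonalCpow_add, sub_add_cancel]
  have hM : ‖A * C 0 * diagonalCpow (d 0) (w 0 - 1)‖ ≤ 1 :=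
    norm_mul_le_one_of_le_one (norm_mul_le_one_of_le_one hA (hC 0))
      (norm_diagonalCpow_le_one (hd0 0) (hd1 0) (by simp [hw₀]))
  have hK : ‖B 0 * diagonalCpowProd (Fin.tail C) (Fin.tail B) (Fin.tail d) (Fin.tail w)‖ ≤ 1 :=
    norm_mul_le_one_of_le_one (hB 0) (norm_diagonalCpowProd_le_one (fun j => hC _)
      (fun j => hB _) (fun j => hd0 _) (fun j => hd1 _) hw)
  convert norm_trace_mul_diagonal_mul_le hM hK (hd0 0) using 3
  rw [diagonalCpowProd_succ, hsplit]
  noncomm_ring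

noncomputable def interpExponents (s : Fin k → ℝ) (z : ℂ) : Fin (k + 1) → ℂ :=
  Fin.cons z fun j => (1 - z) * s j

lemma interpExponents_tail_div_one_sub {t : Fin (k + 1) → ℝ} (ht₀ : t 0 ≠ 1) :
    interpExponents (fun j => t j.succ / (1 - t 0)) (t 0) = fun j => (t j : ℂ) := by
  have hr : (1 : ℂ) - t 0 ≠ 0 := sub_ne_zero.2 (by exact_mod_cast ht₀.symm)
  funext j
  refine Fin.cases rfl (fun j => ?_) j
  simp only [interpExponents, Fin.cons_succ]
  push_cast
  field_simp

lemma re_interpExponents_nonneg {s : Fin k → ℝ} (hs : 0 ≤ s) {z : ℂ} (hz₀ : 0 ≤ z.re)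
    (hz₁ : z.re ≤ 1) (j : Fin (k + 1)) : 0 ≤ (interpExponents s z j).re := by
  refine Fin.cases hz₀ (fun j => ?_) j
  simpa [interpExponents] using mul_nonneg (sub_nonneg.2 hz₁) (hs j)

lemma differentiable_interpExponents (s : Fin k → ℝ) (j : Fin (k + 1)) :
    Differentiable ℂ fun z => interpExponents s z j := by
  refine Fin.cases differentiable_id (fun j => ?_) j
  simp only [interpExponents, Fin.cons_succ]
  fun_prop

lemma tail_interpExponents (s : Fin k → ℝ) (z : ℂ) :
    Fin.tail (interpExponents s z) = (fun j => -z * s j) + fun j => (s j : ℂ) := by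
  funext j
  simp only [interpExponents, Fin.tail, Fin.cons_succ, Pi.add_apply]
  ring

lemma diagonalCpowProd_interpExponents (C B : Fin (k + 1) → Matrix n n ℂ)
    (d : Fin (k + 1) → n → ℝ) (s : Fin k → ℝ) (z : ℂ) :
    diagonalCpowProd C B d (interpExponents s z) = C 0 * diagonalCpow (d 0) z * B 0 *
      diagonalCpowProd (fun j => C j.succ) (fun j => diagonalCpow (d j.succ) (-z * s j) * B j.succ)
        (fun j => d j.succ) fun j => s j := by
  rw [diagonalCpowProd_succ, tail_interpExponents, diagonalCpowProd_add]
  rfl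

theorem norm_trace_mul_diagonalCpowProd_le_one {A : Matrix n n ℂ} (hA : ‖A‖ ≤ 1)
    {C B : Fin k → Matrix n n ℂ} (hC : ∀ j, ‖C j‖ ≤ 1) (hB : ∀ j, ‖B j‖ ≤ 1)
    {d : Fin k → n → ℝ} (hd0 : ∀ j, 0 ≤ d j) (hd1 : ∀ j, ∑ i, d j i ≤ 1)
    {t : Fin k → ℝ} (ht : ∀ j, 0 < t j) (hts : ∑ j, t j = 1) :
    ‖trace (A * diagonalCpowProd C B d fun j => t j)‖ ≤ 1 := by
  induction k generalizing A with
  | zero => simp at hts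
  | succ k ih =>
    have hd1' : ∀ j, d j ≤ 1 := fun j i =>
      (Finset.single_le_sum (fun i _ => hd0 j i) (Finset.mem_univ i)).trans (hd1 j)
    rw [Fin.sum_univ_succ] at hts
    rcases k.eq_zero_or_pos with rfl | hk
    · exact (norm_trace_mul_diagonalCpowProd_le_of_re_eq_one hA hC hB hd0 hd1'
        (by simpa using hts) nofun).trans (hd1 0)
    have hr : 0 < 1 - t 0 := by
      rw [← hts, add_sub_cancel_left]
      exact Finset.sum_pos (fun j _ => ht j.succ) ⟨⟨0, hk⟩, Finset.mem_univ _⟩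
    set s : Fin k → ℝ := fun j => t j.succ / (1 - t 0)
    have hs0 : ∀ j, 0 < s j := fun j => div_pos (ht j.succ) hr
    have hs : ∑ j, s j = 1 := by
      rw [← Finset.sum_div, div_eq_one_iff_eq hr.ne']
      linarith
    set f : ℂ → ℂ := fun z => trace (A * diagonalCpowProd C B d (interpExponents s z))
    have hf : Differentiable ℂ f := ((differentiable_const A).mul
      (differentiable_diagonalCpowProd C B d (differentiable_interpExponents s))).matrix_trace
    have hfB : BddAbove ((norm ∘ f) '' Complex.HadamardThreeLines.verticalClosedStrip 0 1) := by
      refine ⟨Fintype.card n, ?_⟩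
      rintro _ ⟨z, hz, rfl⟩
      exact norm_trace_mul_diagonalCpowProd_le_card hA hC hB hd0 hd1'
        (re_interpExponents_nonneg (fun j => (hs0 j).le) hz.1 hz.2)
    have hf₀ : ∀ z : ℂ, z.re = 0 → ‖f z‖ ≤ 1 := by
      intro z hz
      have hA' : ‖A * (C 0 * diagonalCpow (d 0) z * B 0)‖ ≤ 1 :=
        norm_mul_le_one_of_le_one hA <| norm_mul_le_one_of_le_one (norm_mul_le_one_of_le_one
          (hC 0) (norm_diagonalCpow_le_one (hd0 0) (hd1' 0) hz.ge)) (hB 0)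
      have hB' : ∀ j : Fin k, ‖diagonalCpow (d j.succ) (-z * s j) * B j.succ‖ ≤ 1 := fun j =>
        norm_mul_le_one_of_le_one (norm_diagonalCpow_le_one (hd0 _) (hd1' _) (by simp [hz]))
          (hB j.succ)
      simpa only [f, diagonalCpowProd_interpExponents, mul_assoc] using
        ih hA' (fun j => hC j.succ) hB' (fun j => hd0 j.succ) (fun j => hd1 j.succ) hs0 hs
    have hf₁ : ∀ z : ℂ, z.re = 1 → ‖f z‖ ≤ 1 := fun z hz =>
      (norm_trace_mul_diagonalCpowProd_le_of_re_eq_one hA hC hB hd0 hd1' hz fun j =>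
        re_interpExponents_nonneg (fun j => (hs0 j).le) (by simp [hz]) hz.le j.succ).trans (hd1 0)
    have hmem : (t 0 : ℂ) ∈ Complex.HadamardThreeLines.verticalClosedStrip 0 1 :=
      ⟨by simpa using (ht 0).le, by simpa using by linarith⟩
    simpa [f, s, interpExponents_tail_div_one_sub (by linarith)] using
      Complex.HadamardThreeLines.norm_le_one_of_mem_verticalClosedStrip hf hfB hf₀ hf₁ hmem

end Matrix

lemma exists_contraction_mul_diagonal_singularValues_mul {N : ℕ} (X : Matrix (Fin N) (Fin N) ℂ) :
    ∃ C V : Matrix (Fin N) (Fin N) ℂ, ‖C‖ ≤ 1 ∧ ‖V‖ ≤ 1 ∧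
      X = C * diagonal (fun i => (singularValues X i : ℂ)) * V := by
  set hH := (posSemidef_conjTranspose_mul_self X).1
  set U : Matrix (Fin N) (Fin N) ℂ := (hH.eigenvectorUnitary : Matrix (Fin N) (Fin N) ℂ)
  have hU : U ∈ unitary (Matrix (Fin N) (Fin N) ℂ) := hH.eigenvectorUnitary.2
  have hY : (X * U)ᴴ * (X * U) = diagonal fun i => (singularValues X i : ℂ) ^ 2 := by
    have h := hH.conjStarAlgAut_star_eigenvectorUnitary
    rw [Unitary.conjStarAlgAut_star_apply] at h
    rw [conjTranspose_mul, mul_assoc, ← mul_assoc Xᴴ, ← star_eq_conjTranspose U, ← mul_assoc]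
    refine h.trans (congrArg diagonal (funext fun i => ?_))
    simp only [singularValues, Function.comp_apply, ← Complex.ofReal_pow]
    rw [Real.sq_sqrt ((posSemidef_conjTranspose_mul_self X).eigenvalues_nonneg i)]
    rfl
  obtain ⟨C, hC, hXU⟩ := exists_contraction_mul_diagonal_eq hY
  refine ⟨C, star U, hC, ?_, ?_⟩
  · rw [← one_mul (star U), CStarRing.norm_mul_mem_unitary _ (Unitary.star_mem hU)]
    exact norm_one_le
  · rw [← hXU, mul_assoc, Unitary.mul_star_self_of_mem hU, mul_one]

/-- Generalized Hölder's trace inequality: for N×N complex matrices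
X_1, …, X_k and positive reals p_1, …, p_k with Σ 1/p_i = 1, we have
`|Tr(X_1 X_2 ⋯ X_k)| ≤ Π_i ‖X_i‖_{p_i}`. -/
theorem abs_trace_prod_le_prod_schattenNorm {N k : ℕ}
    (X : Fin k → Matrix (Fin N) (Fin N) ℂ) (p : Fin k → ℝ)
    (hp : ∀ i, 0 < p i) (hpq : ∑ i, 1 / p i = 1) :
    ‖(List.ofFn X).prod.trace‖ ≤ ∏ i, schattenNorm (p i) (X i) := by
  choose C V hC hV hX using fun j => exists_contraction_mul_diagonal_singularValues_mul (X j)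
  have hσ : ∀ j, 0 ≤ singularValues (X j) := fun j i => Real.sqrt_nonneg _
  have hσp : ∀ j i, 0 ≤ singularValues (X j) i ^ p j := fun j i => Real.rpow_nonneg (hσ j i) _
  set d : Fin k → Fin N → ℝ :=
    fun j i => singularValues (X j) i ^ p j / ∑ l, singularValues (X j) l ^ p j
  have hd0 : ∀ j, 0 ≤ d j := fun j i =>
    div_nonneg (hσp j i) (Finset.sum_nonneg fun l _ => hσp j l)
  have hd1 : ∀ j, ∑ i, d j i ≤ 1 := fun j => by
    rw [← Finset.sum_div]
    exact div_self_le_one _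
  have hprod : (List.ofFn X).prod = ((∏ j, schattenNorm (p j) (X j) : ℝ) : ℂ) •
      (1 * diagonalCpowProd C V d fun j => ((1 / p j : ℝ) : ℂ)) := by
    rw [one_mul, diagonalCpowProd, Complex.ofReal_prod, ← List.prod_ofFn_smul]
    congr 2; funext j
    conv_lhs => rw [hX j, diagonal_ofReal_eq_smul_diagonalCpow (hσ j) (hp j)]
    rw [mul_smul_comm, smul_mul_assoc]
    rfl
  have hnonneg : 0 ≤ ∏ j, schattenNorm (p j) (X j) :=
    Finset.prod_nonneg fun j _ => Real.rpow_nonneg (Finset.sum_nonneg fun i _ => hσp j i) _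
  rw [hprod, trace_smul, norm_smul, Complex.norm_real, Real.norm_of_nonneg hnonneg]
  exact mul_le_of_le_one_right hnonneg (norm_trace_mul_diagonalCpowProd_le_one norm_one_le hC hV
    hd0 hd1 (fun j => one_div_pos.2 (hp j)) hpq)
end

section
/- Let a = [[-33,-31],[-31,-82]] and b = [[26,78],[78,-15]] be 2×2 real symmetric matrices, and let A and B be the 20×20 block-diagonal matrices with 10 copies of a (respectively b) along the diagonal. Then Tr((A+B)^4 + (A-B)^4)/2^3 > max(Tr(A^4), Tr(B^4)); specifically, Tr(A^4) = 10·Tr(a^4), Tr(B^4) = 10·Tr(b^4), (Tr((A+B)^4)+Tr((A-B)^4))/8 = 10·(Tr((a+b)^4)+Tr((a-b)^4))/8, and (Tr((a+b)^4)+Tr((a-b)^4))/8 > max(Tr(a^4), Tr(b^4)). -/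
open Matrix

/-- A counterexample: for `a = [[-33,-31],[-31,-82]]`, `b = [[26,78],[78,-15]]`
and A, B the 20×20 block-diagonal matrices with 10 copies of a (resp. b) along
the diagonal, one has `Tr(A^4) = 10·Tr(a^4)`, `Tr(B^4) = 10·Tr(b^4)`,
`(Tr((A+B)^4)+Tr((A-B)^4))/8 = 10·(Tr((a+b)^4)+Tr((a-b)^4))/8`,
`(Tr((a+b)^4)+Tr((a-b)^4))/8 > max(Tr(a^4), Tr(b^4))`, and consequently
`(Tr((A+B)^4)+Tr((A-B)^4))/2^3 > max(Tr(A^4), Tr(B^4))`. -/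
theorem disco_moment_counterexample :
    let a : Matrix (Fin 2) (Fin 2) ℝ := !![-33, -31; -31, -82]
    let b : Matrix (Fin 2) (Fin 2) ℝ := !![26, 78; 78, -15]
    let A : Matrix (Fin 2 × Fin 10) (Fin 2 × Fin 10) ℝ :=
      Matrix.blockDiagonal (fun _ : Fin 10 => a)
    let B : Matrix (Fin 2 × Fin 10) (Fin 2 × Fin 10) ℝ :=
      Matrix.blockDiagonal (fun _ : Fin 10 => b)
    (A ^ 4).trace = 10 * (a ^ 4).trace ∧
      (B ^ 4).trace = 10 * (b ^ 4).trace ∧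
      (((A + B) ^ 4).trace + ((A - B) ^ 4).trace) / 8
        = 10 * ((((a + b) ^ 4).trace + ((a - b) ^ 4).trace) / 8) ∧
      (((a + b) ^ 4).trace + ((a - b) ^ 4).trace) / 8
        > max ((a ^ 4).trace) ((b ^ 4).trace) ∧
      (((A + B) ^ 4).trace + ((A - B) ^ 4).trace) / 2 ^ 3
        > max ((A ^ 4).trace) ((B ^ 4).trace) := by
  intro a b A B
  have hA : ∀ c : Matrix (Fin 2) (Fin 2) ℝ,
      ((Matrix.blockDiagonal (fun _ : Fin 10 => c)) ^ 4).trace = 10 * (c ^ 4).trace := by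
    intro c
    rw [← blockDiagonal_pow, trace_blockDiagonal]
    simp [Finset.sum_const]
  have hab : A + B = Matrix.blockDiagonal (fun _ : Fin 10 => a + b) :=
    (blockDiagonal_add _ _).symm
  have hab' : A - B = Matrix.blockDiagonal (fun _ : Fin 10 => a - b) :=
    (blockDiagonal_sub _ _).symm
  have tr4 : ∀ c : Matrix (Fin 2) (Fin 2) ℝ, (c ^ 4).trace =
      (c*c*(c*c)) 0 0 + (c*c*(c*c)) 1 1 := by
    intro c
    rw [show (4:ℕ) = 2 + 2 by rfl, pow_add, sq, Matrix.trace_fin_two]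
  have ha4 : (a ^ 4).trace = 88680175 := by
    rw [tr4]; simp [a, Matrix.mul_apply, Fin.sum_univ_two]; norm_num
  have hb4 : (b ^ 4).trace = 86973409 := by
    rw [tr4]; simp [b, Matrix.mul_apply, Fin.sum_univ_two]; norm_num
  have hp4 : ((a + b) ^ 4).trace = 187861576 := by
    have : a + b = !![-7, 47; 47, -97] := by
      simp [a, b]; norm_num [← Matrix.ext_iff, Fin.forall_fin_two]
    rw [this, tr4]; simp [Matrix.mul_apply, Fin.sum_univ_two]; norm_num
  have hm4 : ((a - b) ^ 4).trace = 881213456 := by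
    have : a - b = !![-59, -109; -109, -67] := by
      simp [a, b]; norm_num [← Matrix.ext_iff, Fin.forall_fin_two]
    rw [this, tr4]; simp [Matrix.mul_apply, Fin.sum_univ_two]; norm_num
  refine ⟨hA a, hA b, ?_, ?_, ?_⟩
  · rw [hab, hab', hA, hA]; ring
  · rw [ha4, hb4, hp4, hm4]; norm_num
  · rw [hab, hab', hA, hA, hA, hA, ha4, hb4, hp4, hm4]; norm_num
end
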